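/- arXiv:1711.04111 — 3 statements merged into one kernel-verified Lean document; each statement's English description precedes it below -/
import Mathlib

section
/- If (a,b,c) and (f,g,h) are Pythagorean triples (integer triples with a²+b²=c² and f²+g²=h²), then the triple (af, bh+cg, bg+ch) is also a Pythagorean triple. -/
theorem bs_product_pythagorean (a b c f g h : ℤ)
    (h1 : a ^ 2 + b ^ 2 = c ^ 2) (h2 : f ^ 2 + g ^ 2 = h ^ 2) :
    (a * f) ^ 2 + (b * h + c * g) ^ 2 = (b * g + c * h) ^ 2 := by
  nlinarith [sq_nonneg a, sq_nonneg f, h1, h2]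
end

section
/- Define s_j, t_j by s_0 = 1, t_0 = 0, s_{j+1} = s_j + 2t_j, t_{j+1} = s_j + t_j. For every j ≥ 1, the Pythagorean triple (a, b, c) = (2·t_{j+1}·t_j, t_{j+1}² − t_j², t_{j+1}² + t_j²) satisfies |a − b| = 1. -/
theorem almost_isosceles (s t : ℕ → ℤ) (hs0 : s 0 = 1) (ht0 : t 0 = 0)
    (hs : ∀ j, s (j + 1) = s j + 2 * t j) (ht : ∀ j, t (j + 1) = s j + t j) :
    ∀ j ≥ 1, |2 * t (j + 1) * t j - (t (j + 1) ^ 2 - t j ^ 2)| = 1 := by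
  have key : ∀ j, s j ^ 2 - 2 * t j ^ 2 = (-1 : ℤ) ^ j := by
    intro j
    induction j with
    | zero => simp [hs0, ht0]
    | succ n ih => rw [hs n, ht n, pow_succ]; ring_nf; ring_nf at ih; linarith
  intro j _
  have h := key j
  rw [ht j]
  have : 2 * (s j + t j) * t j - ((s j + t j) ^ 2 - t j ^ 2) = -(s j ^ 2 - 2 * t j ^ 2) := by ring
  rw [this, h]
  simp [abs_neg, abs_pow]
end

section
/- Define η_j by η_0 = 0, η_1 = 1, η_{j+1} = 4η_j − η_{j−1} (equivalently ξ_{j+1} = 2ξ_j + 3η_j, η_{j+1} = ξ_j + 2η_j with ξ_0=1). For every j ≥ 1, the Pythagorean triple (a,b,c) = (2·η_{j+1}·η_j, η_{j+1}² − η_j², η_{j+1}² + η_j²) satisfies c − 2a = 1. -/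
theorem c_minus_two_a (η : ℕ → ℤ) (h0 : η 0 = 0) (h1 : η 1 = 1)
    (hrec : ∀ j, η (j + 2) = 4 * η (j + 1) - η j) :
    ∀ j ≥ 1, (η (j + 1) ^ 2 + η j ^ 2) - 2 * (2 * η (j + 1) * η j) = 1 := by
  have key : ∀ j, (η (j + 1) ^ 2 + η j ^ 2) - 2 * (2 * η (j + 1) * η j) = 1 := by
    intro j
    induction j with
    | zero => simp [h0, h1]
    | succ n ih =>
      have := hrec n
      rw [this]
      ring_nf
      ring_nf at ih
      linarith
  exact fun j _ => key j
end
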